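/- arXiv:2601.07452 — 2 statements merged into one kernel-verified Lean document; each statement's English description precedes it below -/
import Mathlib

section
/- If u ≥ 0, π > π*, and u + π ≤ w*, then there exists a direct segmentation (with its direct pricing rule) with consumer surplus u and producer surplus π. -/
open Finset

/-- A market: a probability vector over the `K` valuations. -/
def IsMarket (K : ℕ) (x : Fin K → ℝ) : Prop :=
  (∀ j, 0 ≤ x j) ∧ ∑ j, x j = 1

/-- Revenue from charging price `v k` in market `x`. -/
def rev {K : ℕ} (v x : Fin K → ℝ) (k : Fin K) : ℝ :=
  v k * ∑ j ∈ Finset.Ici k, x j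

/-- Price `v k` is optimal for market `x`. -/
def OptPrice {K : ℕ} (v x : Fin K → ℝ) (k : Fin K) : Prop :=
  ∀ i, rev v x i ≤ rev v x k

/-- A segmentation of the aggregate market `xstar`: a finitely supported probability
distribution on markets averaging to `xstar`. -/
def IsSegmentation {K : ℕ} (xstar : Fin K → ℝ) (σ : (Fin K → ℝ) →₀ ℝ) : Prop :=
  (∀ x, 0 ≤ σ x) ∧ (∑ x ∈ σ.support, σ x = 1) ∧
  (∀ x ∈ σ.support, IsMarket K x) ∧
  (∑ x ∈ σ.support, σ x • x = xstar)

/-- A pricing rule assigns a probability vector over prices to each market in the support. -/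
def IsPricingRule {K : ℕ} (σ : (Fin K → ℝ) →₀ ℝ) (φ : (Fin K → ℝ) → Fin K → ℝ) : Prop :=
  ∀ x ∈ σ.support, (∀ k, 0 ≤ φ x k) ∧ ∑ k, φ x k = 1

/-- A pricing rule is optimal if it only charges optimal prices. -/
def IsOptimalPricing {K : ℕ} (v : Fin K → ℝ) (σ : (Fin K → ℝ) →₀ ℝ)
    (φ : (Fin K → ℝ) → Fin K → ℝ) : Prop :=
  ∀ x ∈ σ.support, ∀ k, 0 < φ x k → OptPrice v x k

/-- Consumer surplus of a segmentation and pricing rule. -/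
def consumerSurplus {K : ℕ} (v : Fin K → ℝ) (σ : (Fin K → ℝ) →₀ ℝ)
    (φ : (Fin K → ℝ) → Fin K → ℝ) : ℝ :=
  ∑ x ∈ σ.support, σ x * ∑ k, φ x k * ∑ j ∈ Finset.Ici k, (v j - v k) * x j

/-- Producer surplus of a segmentation and pricing rule. -/
def producerSurplus {K : ℕ} (v : Fin K → ℝ) (σ : (Fin K → ℝ) →₀ ℝ)
    (φ : (Fin K → ℝ) → Fin K → ℝ) : ℝ :=
  ∑ x ∈ σ.support, σ x * ∑ k, φ x k * (v k * ∑ j ∈ Finset.Ici k, x j)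

/-- A direct segmentation: markets `xs k` for `k ∈ A`, pairwise distinct, with
`xs k ∈ X_k`, weights `w k > 0` summing to one and averaging to `xstar`. -/
def IsDirectSeg {K : ℕ} (v xstar : Fin K → ℝ) (A : Finset (Fin K))
    (xs : Fin K → Fin K → ℝ) (w : Fin K → ℝ) : Prop :=
  Set.InjOn xs (A : Set (Fin K)) ∧
  (∀ k ∈ A, IsMarket K (xs k)) ∧
  (∀ k ∈ A, OptPrice v (xs k) k) ∧
  (∀ k ∈ A, 0 < w k) ∧
  (∑ k ∈ A, w k = 1) ∧
  (∑ k ∈ A, w k • xs k = xstar)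

/-- Consumer surplus of a direct segmentation (with its direct pricing rule). -/
def directCS {K : ℕ} (v : Fin K → ℝ) (A : Finset (Fin K))
    (xs : Fin K → Fin K → ℝ) (w : Fin K → ℝ) : ℝ :=
  ∑ k ∈ A, w k * ∑ j ∈ Finset.Ici k, (v j - v k) * xs k j

/-- Producer surplus of a direct segmentation (with its direct pricing rule). -/
def directPS {K : ℕ} (v : Fin K → ℝ) (A : Finset (Fin K))
    (xs : Fin K → Fin K → ℝ) (w : Fin K → ℝ) : ℝ :=
  ∑ k ∈ A, w k * (v k * ∑ j ∈ Finset.Ici k, xs k j)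

/-- `x` is the characteristic market `x^S`: supported in `S`, and every price in `S`
yields the same revenue. -/
def IsCharMarket {K : ℕ} (v : Fin K → ℝ) (S : Finset (Fin K)) (x : Fin K → ℝ) : Prop :=
  IsMarket K x ∧ (∀ j ∉ S, x j = 0) ∧ ∀ i ∈ S, ∀ i' ∈ S, rev v x i = rev v x i'

/-- The joint distribution over valuations and prices induced by `(σ, φ)`:
mass of the pair `(v j, v k)`. -/
def jointDist {K : ℕ} (σ : (Fin K → ℝ) →₀ ℝ) (φ : (Fin K → ℝ) → Fin K → ℝ)
    (j k : Fin K) : ℝ :=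
  ∑ x ∈ σ.support, σ x * φ x k * x j

/-- The joint distribution over valuations and prices induced by a direct segmentation
with its direct pricing rule. -/
def directJoint {K : ℕ} (A : Finset (Fin K)) (xs : Fin K → Fin K → ℝ) (w : Fin K → ℝ)
    (j k : Fin K) : ℝ :=
  if k ∈ A then w k * xs k j else 0

/-- The total mass `m_k` of price `v k` under `(σ, φ)`. -/
noncomputable def mass {K : ℕ} (σ : (Fin K → ℝ) →₀ ℝ) (φ : (Fin K → ℝ) → Fin K → ℝ)
    (k : Fin K) : ℝ :=
  ∑ x ∈ σ.support, σ x * φ x k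

/-- The conditional market `x^k` given price `v k` under `(σ, φ)`. -/
noncomputable def condMarket {K : ℕ} (σ : (Fin K → ℝ) →₀ ℝ) (φ : (Fin K → ℝ) → Fin K → ℝ)
    (k : Fin K) : Fin K → ℝ :=
  (mass σ φ k)⁻¹ • ∑ x ∈ σ.support, (σ x * φ x k) • x

/-!
Every market with an optimal price `k0` is a convex combination of characteristic markets `x^T`
with `k0 ∈ T`: markets supported on `T` on which every price in `T` earns the same revenue
`v (min T)`. Selling each `x^T` at its lowest price gives consumer surplus `w* - π*` and producer
surplus `π*`; selling it at its highest price gives `0` and `π*`; full information gives `0` and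
`w*`. Every `(u, π)` with `u ≥ 0`, `π > π*` and `u + π ≤ w*` is a mixture of these three with
positive weight on full information. Grouping the pieces by the price charged yields a direct
segmentation, and the full-information part makes the price of each segment its highest optimal
price, so the segments are distinct.
-/

variable {K : ℕ} {v : Fin K → ℝ}

lemma rev_add (x y : Fin K → ℝ) (k : Fin K) : rev v (x + y) k = rev v x k + rev v y k := by
  simp only [rev, Pi.add_apply, sum_add_distrib, mul_add]

lemma rev_sub (x y : Fin K → ℝ) (k : Fin K) : rev v (x - y) k = rev v x k - rev v y k := by
  simp only [rev, Pi.sub_apply, sum_sub_distrib, mul_sub]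

lemma rev_smul (c : ℝ) (x : Fin K → ℝ) (k : Fin K) : rev v (c • x) k = c * rev v x k := by
  simp only [rev, Pi.smul_apply, smul_eq_mul, ← mul_sum]
  ring

lemma rev_sum {ι : Type*} (s : Finset ι) (x : ι → Fin K → ℝ) (k : Fin K) :
    rev v (∑ i ∈ s, x i) k = ∑ i ∈ s, rev v (x i) k := by
  simp only [rev, Finset.sum_apply, mul_sum]
  exact sum_comm

lemma OptPrice.add {x y : Fin K → ℝ} {k : Fin K} (hx : OptPrice v x k) (hy : OptPrice v y k) :
    OptPrice v (x + y) k := fun i => by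
  simpa only [rev_add] using add_le_add (hx i) (hy i)

lemma OptPrice.smul {x : Fin K → ℝ} {k : Fin K} {c : ℝ} (hc : 0 ≤ c) (hx : OptPrice v x k) :
    OptPrice v (c • x) k := fun i => by
  simpa only [rev_smul] using mul_le_mul_of_nonneg_left (hx i) hc

lemma OptPrice.sum {ι : Type*} {s : Finset ι} {x : ι → Fin K → ℝ} {k : Fin K}
    (hx : ∀ i ∈ s, OptPrice v (x i) k) : OptPrice v (∑ i ∈ s, x i) k :=
  Finset.sum_induction x (OptPrice v · k) (fun _ _ => OptPrice.add)
    (fun i => by simp [rev]) hx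

lemma OptPrice.of_rev_eq {x : Fin K → ℝ} {k i : Fin K} (hk : OptPrice v x k)
    (h : rev v x i = rev v x k) : OptPrice v x i := fun l => (hk l).trans h.symm.le

lemma optPrice_sub_smul_iff {x z : Fin K → ℝ} {k : Fin K} {t : ℝ} :
    OptPrice v (z - t • x) k ↔ ∀ i, t * (rev v x k - rev v x i) ≤ rev v z k - rev v z i := by
  simp only [OptPrice, rev_sub, rev_smul]
  exact forall_congr' fun i => by constructor <;> intro h <;> linarith

lemma Ici_min'_Ioi {α : Type*} [LinearOrder α] [LocallyFiniteOrderTop α] {k : α}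
    (h : (Ioi k).Nonempty) : Ici ((Ioi k).min' h) = Ioi k := by
  ext j
  simp only [mem_Ici, mem_Ioi]
  exact ⟨(mem_Ioi.1 ((Ioi k).min'_mem h)).trans_le, fun hj => (Ioi k).min'_le j (mem_Ioi.2 hj)⟩

/-- If `y k = 0`, the next valuation up sells to the same consumers at a higher price. -/
lemma OptPrice.pos (hv0 : ∀ k, 0 < v k) (hv : StrictMono v) {y : Fin K → ℝ} {k : Fin K}
    (hy0 : ∀ j, 0 ≤ y j) (hy : 0 < ∑ j, y j) (hk : OptPrice v y k) : 0 < y k := by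
  have hrev : 0 < rev v y k := by
    obtain ⟨i, -, hi⟩ := exists_lt_of_sum_lt (s := univ) (f := 0) (g := y) (by simpa using hy)
    have hyi : y i ≤ ∑ j ∈ Ici i, y j := single_le_sum (fun j _ => hy0 j) (mem_Ici.2 le_rfl)
    exact (mul_pos (hv0 i) (hi.trans_le hyi)).trans_le (hk i)
  have htail : 0 < ∑ j ∈ Ici k, y j := pos_of_mul_pos_right hrev (hv0 k).le
  by_contra! hyk
  have htail_Ioi : ∑ j ∈ Ioi k, y j = ∑ j ∈ Ici k, y j := by
    rw [Ici_eq_cons_Ioi, sum_cons, le_antisymm hyk (hy0 k), zero_add]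
  have hne : (Ioi k).Nonempty := nonempty_of_sum_ne_zero (htail_Ioi ▸ htail).ne'
  have hnext := hk ((Ioi k).min' hne)
  rw [rev, rev, Ici_min'_Ioi, htail_Ioi] at hnext
  exact hnext.not_gt (mul_lt_mul_of_pos_right (hv (mem_Ioi.1 (min'_mem _ hne))) htail)

noncomputable def charTail (v : Fin K → ℝ) (S : Finset (Fin K)) (t : ℕ) : ℝ :=
  if h : {s ∈ S | t ≤ s.val}.Nonempty then (v ({s ∈ S | t ≤ s.val}.min' h))⁻¹ else 0

/-- The characteristic market `x^S`: its demand `∑_{j ≥ i} x^S_j` at price `v i` is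
`v (min S) * charTail v S i`, which is `v (min S) / v i` for `i ∈ S`, so every price in `S`
earns `v (min S)`. -/
noncomputable def charMarket (v : Fin K → ℝ) (S : Finset (Fin K)) (j : Fin K) : ℝ :=
  (charTail v S 0)⁻¹ * (charTail v S j - charTail v S (j + 1))

section charTail

variable {S : Finset (Fin K)}

lemma charTail_nonneg (hv0 : ∀ k, 0 < v k) (t : ℕ) : 0 ≤ charTail v S t := by
  unfold charTail
  split
  · exact (inv_pos.2 (hv0 _)).le
  · exact le_rfl

lemma charTail_antitone (hv0 : ∀ k, 0 < v k) (hv : StrictMono v) : Antitone (charTail v S) := by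
  intro t t' htt'
  unfold charTail
  split
  · rename_i h'
    have hsub : {s ∈ S | t' ≤ s.val} ⊆ {s ∈ S | t ≤ s.val} :=
      monotone_filter_right S fun _ _ hs => htt'.trans hs
    rw [dif_pos (h'.mono hsub)]
    exact inv_anti₀ (hv0 _) (hv.monotone (min'_subset _ hsub))
  · exact charTail_nonneg hv0 t

lemma charTail_of_le (ht : K ≤ t) : charTail v S t = 0 := by
  refine dif_neg ?_
  rintro ⟨s, hs⟩
  exact (mem_filter.1 hs).2.not_gt (s.isLt.trans_le ht)

lemma charTail_zero (hS : S.Nonempty) : charTail v S 0 = (v (S.min' hS))⁻¹ := by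
  have h : {s ∈ S | 0 ≤ s.val} = S := filter_true_of_mem fun _ _ => Nat.zero_le _
  simp only [charTail, h, dif_pos hS]

lemma charTail_of_mem {j : Fin K} (hj : j ∈ S) : charTail v S j = (v j)⁻¹ := by
  have hjm : j ∈ {s ∈ S | (j : ℕ) ≤ s.val} := mem_filter.2 ⟨hj, le_rfl⟩
  rw [charTail, dif_pos ⟨j, hjm⟩]
  congr 2
  exact le_antisymm (min'_le _ _ hjm) (Fin.le_def.2 (mem_filter.1 (min'_mem _ ⟨j, hjm⟩)).2)

lemma charTail_succ_of_not_mem {j : Fin K} (hj : j ∉ S) :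
    charTail v S (j + 1) = charTail v S j := by
  have h : {s ∈ S | (j : ℕ) + 1 ≤ s.val} = {s ∈ S | (j : ℕ) ≤ s.val} := by
    refine filter_congr fun s hs => ⟨fun h => by omega, fun h => ?_⟩
    rcases h.lt_or_eq with h | h
    · exact h
    · exact absurd (Fin.ext h ▸ hs) hj
  rw [charTail, charTail, h]

lemma mul_charTail_lt_one (hv0 : ∀ k, 0 < v k) (hv : StrictMono v) {i : Fin K} (hi : i ∉ S) :
    v i * charTail v S i < 1 := by
  unfold charTail
  split
  · rename_i h
    have hmem := mem_filter.1 (min'_mem _ h)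
    have hlt : i < {s ∈ S | (i : ℕ) ≤ s.val}.min' h :=
      lt_of_le_of_ne (Fin.le_def.2 hmem.2) fun he => hi (he ▸ hmem.1)
    rw [← div_eq_mul_inv, div_lt_one (hv0 _)]
    exact hv hlt
  · simp

lemma mul_charTail_le_one (hv0 : ∀ k, 0 < v k) (hv : StrictMono v) (i : Fin K) :
    v i * charTail v S i ≤ 1 := by
  by_cases hi : i ∈ S
  · rw [charTail_of_mem hi, mul_inv_cancel₀ (hv0 i).ne']
  · exact (mul_charTail_lt_one hv0 hv hi).le

end charTail

section charMarket

variable {S : Finset (Fin K)}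

lemma charMarket_nonneg (hv0 : ∀ k, 0 < v k) (hv : StrictMono v) (j : Fin K) :
    0 ≤ charMarket v S j :=
  mul_nonneg (inv_nonneg.2 (charTail_nonneg hv0 0))
    (sub_nonneg.2 (charTail_antitone hv0 hv (Nat.le_succ j)))

lemma charMarket_of_not_mem {j : Fin K} (hj : j ∉ S) : charMarket v S j = 0 := by
  rw [charMarket, charTail_succ_of_not_mem hj, sub_self, mul_zero]

lemma sum_Ici_charMarket (i : Fin K) :
    ∑ j ∈ Ici i, charMarket v S j = (charTail v S 0)⁻¹ * charTail v S i := by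
  have htele : ∑ j ∈ Ici i, (charTail v S j - charTail v S (j + 1)) = charTail v S i := by
    calc ∑ j ∈ Ici i, (charTail v S j - charTail v S (j + 1))
        = ∑ t ∈ (Ici i).map Fin.valEmbedding, (charTail v S t - charTail v S (t + 1)) := by
          rw [sum_map]
          rfl
      _ = charTail v S i := by
          rw [Fin.map_valEmbedding_Ici, ← neg_inj, ← sum_neg_distrib]
          simp only [neg_sub]
          rw [sum_Ico_sub _ i.isLt.le, charTail_of_le le_rfl, zero_sub]
  unfold charMarket
  rw [← mul_sum, htele]

lemma sum_charMarket (hv0 : ∀ k, 0 < v k) (hS : S.Nonempty) : ∑ j, charMarket v S j = 1 := by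
  have huniv : (univ : Finset (Fin K)) = Ici ⟨0, hS.choose.pos⟩ := by
    ext j
    simp [Fin.le_def]
  rw [huniv, sum_Ici_charMarket, charTail_zero hS, inv_inv, mul_inv_cancel₀ (hv0 _).ne']

lemma rev_charMarket (hS : S.Nonempty) (i : Fin K) :
    rev v (charMarket v S) i = v (S.min' hS) * (v i * charTail v S i) := by
  rw [rev, sum_Ici_charMarket, charTail_zero hS, inv_inv]
  ring

lemma rev_charMarket_of_mem (hv0 : ∀ k, 0 < v k) {i : Fin K} (hi : i ∈ S) :
    rev v (charMarket v S) i = v (S.min' ⟨i, hi⟩) := by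
  rw [rev_charMarket ⟨i, hi⟩, charTail_of_mem hi, mul_inv_cancel₀ (hv0 i).ne', mul_one]

lemma rev_charMarket_le (hv0 : ∀ k, 0 < v k) (hv : StrictMono v) (hS : S.Nonempty) (i : Fin K) :
    rev v (charMarket v S) i ≤ v (S.min' hS) := by
  rw [rev_charMarket]
  exact mul_le_of_le_one_right (hv0 _).le (mul_charTail_le_one hv0 hv i)

lemma rev_charMarket_lt_of_not_mem (hv0 : ∀ k, 0 < v k) (hv : StrictMono v) (hS : S.Nonempty)
    {i : Fin K} (hi : i ∉ S) : rev v (charMarket v S) i < v (S.min' hS) := by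
  rw [rev_charMarket]
  exact mul_lt_of_lt_one_right (hv0 _) (mul_charTail_lt_one hv0 hv hi)

lemma optPrice_charMarket (hv0 : ∀ k, 0 < v k) (hv : StrictMono v) {i : Fin K} (hi : i ∈ S) :
    OptPrice v (charMarket v S) i := fun l => by
  rw [rev_charMarket_of_mem hv0 hi]
  exact rev_charMarket_le hv0 hv _ l

end charMarket

open Classical in
noncomputable def optSet (v x : Fin K → ℝ) : Finset (Fin K) := {k | OptPrice v x k}

lemma mem_optSet {x : Fin K → ℝ} {k : Fin K} : k ∈ optSet v x ↔ OptPrice v x k := by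
  simp [optSet]


section peel

variable {z : Fin K → ℝ} {k0 : Fin K}

/-- The largest `t` keeping `k0` optimal for `z - t • x^S` is the least ratio, over the prices `i`
outside `S`, of the revenue gap of `z` to the revenue gap of `x^S`; it makes such an `i` optimal. -/
lemma exists_peel (hv0 : ∀ k, 0 < v k) (hv : StrictMono v) (hk0 : OptPrice v z k0)
    (hone : ¬ OptPrice v (z - charMarket v (optSet v z)) k0) :
    ∃ t : ℝ, 0 ≤ t ∧ t < 1 ∧ OptPrice v (z - t • charMarket v (optSet v z)) k0 ∧
      ∃ i0 ∉ optSet v z, rev v (z - t • charMarket v (optSet v z)) i0 =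
        rev v (z - t • charMarket v (optSet v z)) k0 := by
  set S := optSet v z
  have hk0S : k0 ∈ S := mem_optSet.2 hk0
  set x := charMarket v S
  have hdrop : ∀ i ∉ S, 0 < rev v x k0 - rev v x i := fun i hi => by
    linarith [rev_charMarket_of_mem hv0 hk0S, rev_charMarket_lt_of_not_mem hv0 hv ⟨k0, hk0S⟩ hi]
  have hflat : ∀ i ∈ S, rev v x k0 - rev v x i = 0 ∧ rev v z k0 - rev v z i = 0 := fun i hi => by
    rw [rev_charMarket_of_mem hv0 hk0S, rev_charMarket_of_mem hv0 hi,
      le_antisymm (hk0 i) (mem_optSet.1 hi k0)]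
    exact ⟨sub_self _, sub_self _⟩
  obtain ⟨i1, hi1⟩ : ∃ i, rev v z k0 - rev v z i < rev v x k0 - rev v x i := by
    have := (not_congr (optPrice_sub_smul_iff (t := 1))).1 (by rwa [one_smul])
    push Not at this
    simpa using this
  have hi1S : i1 ∉ S := fun hi => by linarith [hflat i1 hi]
  obtain ⟨i0, hi0, hmin⟩ := exists_min_image Sᶜ
    (fun i => (rev v z k0 - rev v z i) / (rev v x k0 - rev v x i)) ⟨i1, mem_compl.2 hi1S⟩
  rw [mem_compl] at hi0
  refine ⟨(rev v z k0 - rev v z i0) / (rev v x k0 - rev v x i0),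
    div_nonneg (sub_nonneg.2 (hk0 i0)) (hdrop i0 hi0).le,
    (hmin i1 (mem_compl.2 hi1S)).trans_lt ((div_lt_one (hdrop i1 hi1S)).2 hi1),
    optPrice_sub_smul_iff.2 fun i => ?_, i0, hi0, ?_⟩
  · by_cases hi : i ∈ S
    · rw [(hflat i hi).1, (hflat i hi).2, mul_zero]
    · exact (le_div_iff₀ (hdrop i hi)).1 (hmin i (mem_compl.2 hi))
  · have := div_mul_cancel₀ (rev v z k0 - rev v z i0) (hdrop i0 hi0).ne'
    rw [rev_sub, rev_sub, rev_smul, rev_smul]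
    linarith

lemma rev_sub_smul_charMarket_optSet (hv0 : ∀ k, 0 < v k) (hk0 : OptPrice v z k0) {i : Fin K}
    (hi : i ∈ optSet v z) (t : ℝ) :
    rev v (z - t • charMarket v (optSet v z)) i = rev v (z - t • charMarket v (optSet v z)) k0 := by
  rw [rev_sub, rev_sub, rev_smul, rev_smul, rev_charMarket_of_mem hv0 hi,
    rev_charMarket_of_mem hv0 (mem_optSet.2 hk0), le_antisymm (hk0 i) (mem_optSet.1 hi k0)]

/-- If some `t * x^S_j` exceeds `z_j`, a smaller multiple `ρ • x^S` exhausts `z` exactly at some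
`j0 ∈ S`; then `j0` is optimal for `z - ρ • x^S`, a mixture of `z` and `z - t • x^S`, which carries
no mass at `j0`. -/
lemma smul_charMarket_optSet_le (hv0 : ∀ k, 0 < v k) (hv : StrictMono v) (hz : IsMarket K z)
    (hk0 : OptPrice v z k0) {t : ℝ} (ht0 : 0 ≤ t) (ht1 : t ≤ 1)
    (hres : OptPrice v (z - t • charMarket v (optSet v z)) k0) (j : Fin K) :
    t * charMarket v (optSet v z) j ≤ z j := by
  set S := optSet v z
  set x := charMarket v S
  by_contra! hlt
  have hxj : 0 < x j := pos_of_mul_pos_right ((hz.1 j).trans_lt hlt) ht0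
  obtain ⟨j0, hj0, hmin⟩ := exists_min_image {l | 0 < x l} (fun l => z l / x l) ⟨j, by simpa⟩
  have hxj0 : 0 < x j0 := by simpa using hj0
  set ρ := z j0 / x j0
  have hρt : ρ < t := (hmin j (by simpa)).trans_lt ((div_lt_iff₀ hxj).2 hlt)
  have hy0 : ∀ l, 0 ≤ (z - ρ • x) l := by
    intro l
    simp only [Pi.sub_apply, Pi.smul_apply, smul_eq_mul, sub_nonneg]
    have hxl : 0 ≤ x l := charMarket_nonneg hv0 hv l
    rcases hxl.eq_or_lt with h | h
    · rw [← h, mul_zero]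
      exact hz.1 l
    · exact (le_div_iff₀ h).1 (hmin l (by simpa))
  have hyj0 : (z - ρ • x) j0 = 0 := by simp [ρ, div_mul_cancel₀ _ hxj0.ne']
  have hj0S : j0 ∈ S := by
    by_contra h
    exact hxj0.ne' (charMarket_of_not_mem h)
  have hysum : 0 < ∑ l, (z - ρ • x) l := by
    have hx : ∑ l, x l = 1 := sum_charMarket hv0 ⟨j0, hj0S⟩
    simp only [Pi.sub_apply, Pi.smul_apply, smul_eq_mul, sum_sub_distrib, ← mul_sum, hz.2, hx]
    linarith
  have hopt : OptPrice v (z - ρ • x) j0 := by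
    have ht : 0 < t := (div_nonneg (hz.1 j0) hxj0.le).trans_lt hρt
    have hsplit : z - ρ • x = (1 - ρ / t) • z + (ρ / t) • (z - t • x) := by
      ext l
      simp only [Pi.add_apply, Pi.sub_apply, Pi.smul_apply, smul_eq_mul]
      field_simp
      ring
    rw [hsplit]
    exact ((mem_optSet.1 hj0S).smul (by rw [sub_nonneg, div_le_one ht]; exact hρt.le)).add
      ((hres.of_rev_eq (rev_sub_smul_charMarket_optSet hv0 hk0 hj0S t)).smul
        (div_nonneg (div_nonneg (hz.1 j0) hxj0.le) ht.le))
  exact (OptPrice.pos hv0 hv hy0 hysum hopt).ne' hyj0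

lemma isMarket_peel (hv0 : ∀ k, 0 < v k) (hv : StrictMono v) (hz : IsMarket K z)
    (hk0 : OptPrice v z k0) {t : ℝ} (ht0 : 0 ≤ t) (ht1 : t < 1)
    (hres : OptPrice v (z - t • charMarket v (optSet v z)) k0) :
    IsMarket K ((1 - t)⁻¹ • (z - t • charMarket v (optSet v z))) := by
  refine ⟨fun j => mul_nonneg (inv_nonneg.2 (by linarith)) (sub_nonneg.2
    (smul_charMarket_optSet_le hv0 hv hz hk0 ht0 ht1.le hres j)), ?_⟩
  have hx : ∑ j, charMarket v (optSet v z) j = 1 := sum_charMarket hv0 ⟨k0, mem_optSet.2 hk0⟩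
  simp only [Pi.smul_apply, Pi.sub_apply, smul_eq_mul, ← mul_sum, sum_sub_distrib, hz.2, hx]
  field_simp [(by linarith : (1 : ℝ) - t ≠ 0)]

end peel

/-- Peel off the largest multiple of `x^S`, `S` the optimal prices of `z`, that keeps `k0`
optimal; the rescaled remainder has strictly more optimal prices. -/
theorem exists_charMarket_decomposition (hv0 : ∀ k, 0 < v k) (hv : StrictMono v) {k0 : Fin K}
    (z : Fin K → ℝ) (hz : IsMarket K z) (hk0 : OptPrice v z k0) :
    ∃ μ : {T : Finset (Fin K) // k0 ∈ T} → ℝ,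
      (∀ T, 0 ≤ μ T) ∧ ∑ T, μ T • charMarket v T.1 = z := by
  set S := optSet v z
  have hk0S : k0 ∈ S := mem_optSet.2 hk0
  set x := charMarket v S
  set T0 : {T : Finset (Fin K) // k0 ∈ T} := ⟨S, hk0S⟩
  have hsingle (c : ℝ) : ∑ T, Pi.single (M := fun _ => ℝ) T0 c T • charMarket v T.1 = c • x := by
    simp [Pi.single_apply, ite_smul, x, T0]
  have hsingle_nonneg {c : ℝ} (hc : 0 ≤ c) (T) : 0 ≤ Pi.single (M := fun _ => ℝ) T0 c T := by
    rw [Pi.single_apply]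
    split <;> simp [hc]
  by_cases hone : OptPrice v (z - x) k0
  · have hle := smul_charMarket_optSet_le hv0 hv hz hk0 zero_le_one le_rfl (by rwa [one_smul])
    have hzx : z = x := by
      refine funext fun j => ((sum_eq_sum_iff_of_le fun j _ => ?_).1 ?_ j (mem_univ j)).symm
      · simpa using hle j
      · rw [sum_charMarket hv0 ⟨k0, hk0S⟩, hz.2]
    exact ⟨Pi.single T0 1, hsingle_nonneg zero_le_one, by rw [hsingle, one_smul, hzx]⟩
  obtain ⟨t, ht0, ht1, hres, i0, hi0, hi0opt⟩ := exists_peel hv0 hv hk0 hone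
  set z' := (1 - t)⁻¹ • (z - t • x)
  have hopt' : ∀ i ∈ insert i0 S, OptPrice v z' i := by
    intro i hi
    refine OptPrice.smul (inv_nonneg.2 (by linarith)) (hres.of_rev_eq ?_)
    rcases mem_insert.1 hi with rfl | hi
    · exact hi0opt
    · exact rev_sub_smul_charMarket_optSet hv0 hk0 hi t
  have hgrow : #S < #(optSet v z') := by
    have hsub : insert i0 S ⊆ optSet v z' := fun i hi => mem_optSet.2 (hopt' i hi)
    exact (lt_add_one _).trans_le ((card_insert_of_notMem hi0).symm.trans_le (card_le_card hsub))
  obtain ⟨μ, hμ0, hμ⟩ := exists_charMarket_decomposition hv0 hv z'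
    (isMarket_peel hv0 hv hz hk0 ht0 ht1 hres) (hopt' k0 (mem_insert_of_mem hk0S))
  refine ⟨Pi.single T0 t + (1 - t) • μ,
    fun T => add_nonneg (hsingle_nonneg ht0 T) (mul_nonneg (by linarith) (hμ0 T)), ?_⟩
  simp only [Pi.add_apply, Pi.smul_apply, smul_eq_mul, add_smul, sum_add_distrib, hsingle,
    mul_smul, ← smul_sum, hμ, z', smul_inv_smul₀ (by linarith : (1 : ℝ) - t ≠ 0)]
  abel
termination_by K - #(optSet v z)
decreasing_by
  have := card_le_univ (optSet v z')
  rw [Fintype.card_fin] at this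
  change K - #(optSet v z') < K - #S
  omega

def consumerSurplusAt (v x : Fin K → ℝ) (k : Fin K) : ℝ :=
  ∑ j ∈ Ici k, (v j - v k) * x j

lemma consumerSurplusAt_add (x y : Fin K → ℝ) (k : Fin K) :
    consumerSurplusAt v (x + y) k = consumerSurplusAt v x k + consumerSurplusAt v y k := by
  simp only [consumerSurplusAt, Pi.add_apply, mul_add, sum_add_distrib]

lemma consumerSurplusAt_smul (c : ℝ) (x : Fin K → ℝ) (k : Fin K) :
    consumerSurplusAt v (c • x) k = c * consumerSurplusAt v x k := by
  simp only [consumerSurplusAt, Pi.smul_apply, smul_eq_mul, mul_sum]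
  exact sum_congr rfl fun _ _ => by ring

lemma consumerSurplusAt_sum {ι : Type*} (s : Finset ι) (x : ι → Fin K → ℝ) (k : Fin K) :
    consumerSurplusAt v (∑ i ∈ s, x i) k = ∑ i ∈ s, consumerSurplusAt v (x i) k := by
  simp only [consumerSurplusAt, Finset.sum_apply, mul_sum]
  exact sum_comm

lemma consumerSurplusAt_eq (x : Fin K → ℝ) (k : Fin K) :
    consumerSurplusAt v x k = ∑ j ∈ Ici k, v j * x j - rev v x k := by
  simp only [consumerSurplusAt, rev, sub_mul, sum_sub_distrib, mul_sum]

lemma le_of_optPrice_of_lt {x : Fin K → ℝ} {k i : Fin K} (hi : OptPrice v x i)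
    (hk : ∀ l, k < l → rev v x l < rev v x k) : i ≤ k :=
  not_lt.1 fun hki => (hk i hki).not_ge (hi k)

section normalize

variable {m : Fin K → Fin K → ℝ}

/-- `hlast` makes `k` the highest optimal price of the segment `m k`, which keeps the segments
distinct. -/
lemma isDirectSeg_normalize {xstar : Fin K → ℝ} (hm0 : ∀ k j, 0 ≤ m k j)
    (hpos : ∀ k, 0 < ∑ j, m k j) (hopt : ∀ k, OptPrice v (m k) k)
    (hlast : ∀ k l, k < l → rev v (m k) l < rev v (m k) k)
    (hsum : ∑ k, m k = xstar) (hxstar : ∑ j, xstar j = 1) :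
    IsDirectSeg v xstar univ (fun k => (∑ j, m k j)⁻¹ • m k) (fun k => ∑ j, m k j) := by
  have hinv : ∀ k, 0 < (∑ j, m k j)⁻¹ := fun k => inv_pos.2 (hpos k)
  have hopt' : ∀ k, OptPrice v ((∑ j, m k j)⁻¹ • m k) k := fun k => (hopt k).smul (hinv k).le
  have hlast' : ∀ k l, k < l →
      rev v ((∑ j, m k j)⁻¹ • m k) l < rev v ((∑ j, m k j)⁻¹ • m k) k := fun k l hkl => by
    simpa only [rev_smul] using mul_lt_mul_of_pos_left (hlast k l hkl) (hinv k)
  refine ⟨fun k _ l _ hkl => ?_, fun k _ => ⟨fun j => ?_, ?_⟩, fun k _ => hopt' k,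
    fun k _ => hpos k, ?_, ?_⟩
  · simp only at hkl
    exact le_antisymm (le_of_optPrice_of_lt (hkl ▸ hopt' k) (hlast' l))
      (le_of_optPrice_of_lt (hkl ▸ hopt' l) (hlast' k))
  · exact mul_nonneg (hinv k).le (hm0 k j)
  · simp only [Pi.smul_apply, smul_eq_mul, ← mul_sum, inv_mul_cancel₀ (hpos k).ne']
  · rw [sum_comm, ← hxstar]
    exact sum_congr rfl fun j _ => by rw [← hsum, Finset.sum_apply]
  · simp only [smul_inv_smul₀ (hpos _).ne', hsum]

lemma directCS_normalize (hpos : ∀ k, 0 < ∑ j, m k j) :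
    directCS v univ (fun k => (∑ j, m k j)⁻¹ • m k) (fun k => ∑ j, m k j) =
      ∑ k, consumerSurplusAt v (m k) k := by
  refine sum_congr rfl fun k _ => ?_
  change _ * consumerSurplusAt v _ k = _
  rw [consumerSurplusAt_smul, mul_inv_cancel_left₀ (hpos k).ne']

lemma directPS_normalize (hpos : ∀ k, 0 < ∑ j, m k j) :
    directPS v univ (fun k => (∑ j, m k j)⁻¹ • m k) (fun k => ∑ j, m k j) =
      ∑ k, rev v (m k) k := by
  refine sum_congr rfl fun k _ => ?_
  change _ * rev v _ k = _
  rw [rev_smul, mul_inv_cancel_left₀ (hpos k).ne']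

end normalize

lemma sum_fiberwise_dep {ι κ : Type*} [Fintype ι] [Fintype κ] [DecidableEq κ] (g : ι → κ)
    (f : κ → ι → ℝ) : ∑ k, ∑ i with g i = k, f k i = ∑ i, f (g i) i := by
  rw [← sum_fiberwise univ g fun i => f (g i) i]
  exact sum_congr rfl fun k _ => sum_congr rfl fun i hi => by rw [(mem_filter.1 hi).2]

section pool

variable {ι : Type*} [Fintype ι] (ℓ : ι → Fin K) (y : ι → Fin K → ℝ)

def pool (k : Fin K) : Fin K → ℝ :=
  ∑ i with ℓ i = k, y i

lemma sum_pool : ∑ k, pool ℓ y k = ∑ i, y i :=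
  sum_fiberwise univ ℓ y

lemma sum_rev_pool : ∑ k, rev v (pool ℓ y k) k = ∑ i, rev v (y i) (ℓ i) := by
  simp only [pool, rev_sum]
  exact sum_fiberwise_dep ℓ fun k i => rev v (y i) k

lemma sum_consumerSurplusAt_pool :
    ∑ k, consumerSurplusAt v (pool ℓ y k) k = ∑ i, consumerSurplusAt v (y i) (ℓ i) := by
  simp only [pool, consumerSurplusAt_sum]
  exact sum_fiberwise_dep ℓ fun k i => consumerSurplusAt v (y i) k

variable {ℓ y}

lemma pool_nonneg (hy : ∀ i j, 0 ≤ y i j) (k j : Fin K) : 0 ≤ pool ℓ y k j := by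
  simp only [pool, Finset.sum_apply]
  exact sum_nonneg fun i _ => hy i j

lemma optPrice_pool (hy : ∀ i, OptPrice v (y i) (ℓ i)) (k : Fin K) :
    OptPrice v (pool ℓ y k) k :=
  OptPrice.sum fun i hi => (mem_filter.1 hi).2 ▸ hy i

end pool

section charPool

variable {S : Finset (Fin K)}

lemma consumerSurplusAt_charMarket_min' (hv0 : ∀ k, 0 < v k) (hS : S.Nonempty) :
    consumerSurplusAt v (charMarket v S) (S.min' hS) =
      ∑ j, v j * charMarket v S j - v (S.min' hS) := by
  rw [consumerSurplusAt_eq, rev_charMarket_of_mem hv0 (min'_mem S hS)]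
  congr 1
  refine sum_subset (subset_univ _) fun j _ hj => ?_
  rw [charMarket_of_not_mem fun hjS => hj (mem_Ici.2 (min'_le S j hjS)), mul_zero]

lemma consumerSurplusAt_charMarket_max' (hS : S.Nonempty) :
    consumerSurplusAt v (charMarket v S) (S.max' hS) = 0 :=
  sum_eq_zero fun j hj => by
    rcases (mem_Ici.1 hj).eq_or_lt with h | h
    · rw [h, sub_self, zero_mul]
    · rw [charMarket_of_not_mem fun hjS => (le_max' S j hjS).not_gt h, mul_zero]

variable {k0 : Fin K} {μ : {T : Finset (Fin K) // k0 ∈ T} → ℝ} {z : Fin K → ℝ}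
  {ℓ : {T : Finset (Fin K) // k0 ∈ T} → Fin K}

lemma optPrice_pool_charMarket (hv0 : ∀ k, 0 < v k) (hv : StrictMono v) (hμ0 : ∀ T, 0 ≤ μ T)
    (hℓ : ∀ T, ℓ T ∈ T.1) (k : Fin K) :
    OptPrice v (pool ℓ (fun T => μ T • charMarket v T.1) k) k :=
  optPrice_pool (fun T => (optPrice_charMarket hv0 hv (hℓ T)).smul (hμ0 T)) k

/-- Every price in `T` earns `v (min T)` from `x^T`, and `k0 ∈ T`. -/
lemma sum_rev_pool_charMarket (hv0 : ∀ k, 0 < v k) (hμ : ∑ T, μ T • charMarket v T.1 = z)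
    (hℓ : ∀ T, ℓ T ∈ T.1) :
    ∑ k, rev v (pool ℓ (fun T => μ T • charMarket v T.1) k) k = rev v z k0 := by
  rw [sum_rev_pool, ← hμ, rev_sum]
  refine sum_congr rfl fun T _ => ?_
  rw [rev_smul, rev_smul, rev_charMarket_of_mem hv0 (hℓ T), rev_charMarket_of_mem hv0 T.2]

lemma sum_consumerSurplusAt_pool_min' (hv0 : ∀ k, 0 < v k)
    (hμ : ∑ T, μ T • charMarket v T.1 = z) :
    ∑ k, consumerSurplusAt v
        (pool (fun T => T.1.min' ⟨k0, T.2⟩) (fun T => μ T • charMarket v T.1) k) k =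
      ∑ j, v j * z j - rev v z k0 := by
  have hval : ∑ T, μ T * ∑ j, v j * charMarket v T.1 j = ∑ j, v j * z j := by
    simp only [← hμ, Finset.sum_apply, Pi.smul_apply, smul_eq_mul, mul_sum]
    rw [sum_comm]
    exact sum_congr rfl fun j _ => sum_congr rfl fun T _ => by ring
  have hrev : ∑ T, μ T * v (T.1.min' ⟨k0, T.2⟩) = rev v z k0 := by
    rw [← hμ, rev_sum]
    exact sum_congr rfl fun T _ => by rw [rev_smul, rev_charMarket_of_mem hv0 T.2]
  rw [sum_consumerSurplusAt_pool, ← hval, ← hrev, ← sum_sub_distrib]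
  refine sum_congr rfl fun T _ => ?_
  rw [consumerSurplusAt_smul, consumerSurplusAt_charMarket_min' hv0 ⟨k0, T.2⟩, mul_sub]

lemma sum_consumerSurplusAt_pool_max' :
    ∑ k, consumerSurplusAt v
        (pool (fun T => T.1.max' ⟨k0, T.2⟩) (fun T => μ T • charMarket v T.1) k) k = 0 := by
  rw [sum_consumerSurplusAt_pool]
  exact sum_eq_zero fun T _ => by
    rw [consumerSurplusAt_smul, consumerSurplusAt_charMarket_max' ⟨k0, T.2⟩, mul_zero]

end charPool

lemma rev_single (k : Fin K) (c : ℝ) (i : Fin K) :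
    rev v (Pi.single k c) i = if i ≤ k then v i * c else 0 := by
  simp [rev, Pi.single_apply]

lemma optPrice_single (hv0 : ∀ k, 0 < v k) (hv : StrictMono v) {c : ℝ} (hc : 0 ≤ c)
    (k : Fin K) : OptPrice v (Pi.single k c) k := fun i => by
  rw [rev_single, rev_single, if_pos le_rfl]
  split_ifs with h
  · exact mul_le_mul_of_nonneg_right (hv.monotone h) hc
  · exact mul_nonneg (hv0 k).le hc

lemma consumerSurplusAt_single (k : Fin K) (c : ℝ) :
    consumerSurplusAt v (Pi.single k c) k = 0 := by
  simp [consumerSurplusAt, Pi.single_apply]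

/-- Adding a positive multiple of full information makes each `k` the highest optimal price of
the segment `m k`. -/
lemma isDirectSeg_mix (hv0 : ∀ k, 0 < v k) (hv : StrictMono v) {xstar : Fin K → ℝ}
    (hxstar : IsMarket K xstar) (hxpos : ∀ k, 0 < xstar k) {a b c : ℝ} (ha : 0 < a) (hb : 0 ≤ b)
    (hc : 0 ≤ c) (habc : a + b + c = 1) {low high m : Fin K → Fin K → ℝ}
    (hlow0 : ∀ k j, 0 ≤ low k j) (hhigh0 : ∀ k j, 0 ≤ high k j)
    (hlow : ∀ k, OptPrice v (low k) k) (hhigh : ∀ k, OptPrice v (high k) k)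
    (hlow_sum : ∑ k, low k = xstar) (hhigh_sum : ∑ k, high k = xstar)
    (hm : m = fun k => a • Pi.single k (xstar k) + b • low k + c • high k) :
    IsDirectSeg v xstar univ (fun k => (∑ j, m k j)⁻¹ • m k) (fun k => ∑ j, m k j) := by
  have hsingle0 : ∀ k, 0 ≤ (Pi.single k (xstar k) : Fin K → ℝ) := fun k =>
    Pi.single_nonneg.2 (hxpos k).le
  have hm_apply : ∀ k j,
      m k j = a * (Pi.single k (xstar k) : Fin K → ℝ) j + b * low k j + c * high k j := by
    simp [hm]
  have hm0 : ∀ k j, 0 ≤ m k j := fun k j => by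
    rw [hm_apply]
    exact add_nonneg (add_nonneg (mul_nonneg ha.le (hsingle0 k j)) (mul_nonneg hb (hlow0 k j)))
      (mul_nonneg hc (hhigh0 k j))
  refine isDirectSeg_normalize hm0 (fun k => ?_) (fun k => ?_) (fun k l hkl => ?_) ?_ hxstar.2
  · have hmk : a * xstar k ≤ m k k := by
      rw [hm_apply, Pi.single_eq_same]
      linarith [mul_nonneg hb (hlow0 k k), mul_nonneg hc (hhigh0 k k)]
    exact (mul_pos ha (hxpos k)).trans_le
      (hmk.trans (single_le_sum (fun j _ => hm0 k j) (mem_univ k)))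
  · rw [hm]
    exact (((optPrice_single hv0 hv (hxpos k).le k).smul ha.le).add ((hlow k).smul hb)).add
      ((hhigh k).smul hc)
  · simp only [hm, rev_add, rev_smul, rev_single, if_neg hkl.not_ge, if_pos le_rfl]
    linarith [mul_le_mul_of_nonneg_left (hlow k l) hb, mul_le_mul_of_nonneg_left (hhigh k l) hc,
      mul_pos ha (mul_pos (hv0 k) (hxpos k))]
  · simp only [hm, sum_add_distrib, ← smul_sum, Finset.univ_sum_single, hlow_sum, hhigh_sum]
    rw [← add_smul, ← add_smul, habc, one_smul]

theorem exists_directSeg_mix (hv0 : ∀ k, 0 < v k) (hv : StrictMono v) {xstar : Fin K → ℝ}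
    (hxstar : IsMarket K xstar) (hxpos : ∀ k, 0 < xstar k) {k0 : Fin K}
    (hk0 : OptPrice v xstar k0) {a b c : ℝ} (ha : 0 < a) (hb : 0 ≤ b) (hc : 0 ≤ c)
    (habc : a + b + c = 1) :
    ∃ xs w, IsDirectSeg v xstar univ xs w ∧
      directCS v univ xs w = b * (∑ j, v j * xstar j - rev v xstar k0) ∧
      directPS v univ xs w = a * ∑ j, v j * xstar j + (b + c) * rev v xstar k0 := by
  obtain ⟨μ, hμ0, hμ⟩ := exists_charMarket_decomposition hv0 hv xstar hxstar hk0
  set low := pool (fun T => T.1.min' ⟨k0, T.2⟩) fun T => μ T • charMarket v T.1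
  set high := pool (fun T => T.1.max' ⟨k0, T.2⟩) fun T => μ T • charMarket v T.1
  set m : Fin K → Fin K → ℝ := fun k => a • Pi.single k (xstar k) + b • low k + c • high k
  have hy0 : ∀ T j, 0 ≤ (μ T • charMarket v T.1) j := fun T j =>
    mul_nonneg (hμ0 T) (charMarket_nonneg hv0 hv j)
  have hseg := isDirectSeg_mix hv0 hv hxstar hxpos ha hb hc habc (pool_nonneg hy0)
    (pool_nonneg hy0) (optPrice_pool_charMarket hv0 hv hμ0 fun T => min'_mem _ _)
    (optPrice_pool_charMarket hv0 hv hμ0 fun T => max'_mem _ _)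
    (by rw [sum_pool, hμ]) (by rw [sum_pool, hμ]) (m := m) rfl
  have hpos : ∀ k, 0 < ∑ j, m k j := fun k => hseg.2.2.2.1 k (mem_univ k)
  refine ⟨_, _, hseg, ?_, ?_⟩
  · simp only [directCS_normalize hpos, m, consumerSurplusAt_add, consumerSurplusAt_smul,
      sum_add_distrib, ← mul_sum, consumerSurplusAt_single, sum_const_zero, low, high]
    rw [sum_consumerSurplusAt_pool_min' hv0 hμ, sum_consumerSurplusAt_pool_max']
    ring
  · simp only [directPS_normalize hpos, m, rev_add, rev_smul, sum_add_distrib, ← mul_sum,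
      rev_single, if_pos le_rfl, low, high]
    rw [sum_rev_pool_charMarket (ℓ := fun T => T.1.min' ⟨k0, T.2⟩) hv0 hμ fun T => min'_mem _ _,
      sum_rev_pool_charMarket (ℓ := fun T => T.1.max' ⟨k0, T.2⟩) hv0 hμ fun T => max'_mem _ _]
    ring

theorem stmt4_general {K : ℕ} (v : Fin K → ℝ)
    (hv0 : ∀ k, 0 < v k) (hv : StrictMono v)
    (xstar : Fin K → ℝ) (hxstar : IsMarket K xstar) (hxpos : ∀ k, 0 < xstar k)
    (wstar πstar : ℝ) (hw : wstar = ∑ j, v j * xstar j)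
    (hπ : IsGreatest (Set.range (rev v xstar)) πstar)
    (u π : ℝ) (hu : 0 ≤ u) (hπpos : πstar < π) (huπ : u + π ≤ wstar) :
    ∃ (A : Finset (Fin K)) (xs : Fin K → Fin K → ℝ) (w : Fin K → ℝ),
      IsDirectSeg v xstar A xs w ∧ directCS v A xs w = u ∧ directPS v A xs w = π := by
  obtain ⟨⟨k0, hk0⟩, hmax⟩ := hπ
  have hopt : OptPrice v xstar k0 := fun i => hk0 ▸ hmax ⟨i, rfl⟩
  have hgap : 0 < wstar - πstar := by linarith
  obtain ⟨xs, w, hseg, hcs, hps⟩ := exists_directSeg_mix hv0 hv hxstar hxpos hopt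
    (a := (π - πstar) / (wstar - πstar)) (b := u / (wstar - πstar))
    (c := (wstar - u - π) / (wstar - πstar)) (div_pos (by linarith) hgap)
    (div_nonneg hu hgap.le) (div_nonneg (by linarith) hgap.le) (by field_simp; ring)
  refine ⟨univ, xs, w, hseg, ?_, ?_⟩
  · rw [hcs, ← hw, hk0]
    field_simp
  · rw [hps, ← hw, hk0]
    field_simp
    ring

theorem stmt4 {K : ℕ} (hK : 2 ≤ K) (v : Fin K → ℝ)
    (hv0 : ∀ k, 0 < v k) (hv : StrictMono v)
    (xstar : Fin K → ℝ) (hxstar : IsMarket K xstar) (hxpos : ∀ k, 0 < xstar k)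
    (wstar πstar : ℝ) (hw : wstar = ∑ j, v j * xstar j)
    (hπ : IsGreatest (Set.range (rev v xstar)) πstar)
    (u π : ℝ) (hu : 0 ≤ u) (hπpos : πstar < π) (huπ : u + π ≤ wstar) :
    ∃ (A : Finset (Fin K)) (xs : Fin K → Fin K → ℝ) (w : Fin K → ℝ),
      IsDirectSeg v xstar A xs w ∧ directCS v A xs w = u ∧ directPS v A xs w = π :=
  stmt4_general v hv0 hv xstar hxstar hxpos wstar πstar hw hπ u π hu hπpos huπ
end

section
/- Suppose a market x can be written as x = ∑_{i=1}^m α_i x^{S_i}, where m ≥ 1, α_i > 0 with ∑_{i=1}^m α_i = 1, and each S_i is a subset of {1,…,K} containing a fixed index k. Then for any ℓ ∈ {1,…,K}, price v_ℓ is optimal for x if and only if ℓ ∈ S_i for all i = 1,…,m. -/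
open Finset

/-!
The revenue `rev v · ℓ` is linear in the market, so the revenue curve of `x` is the
`α`-weighted average of those of the characteristic markets `x^{S_i}`. Each `x^{S_i}` has a
flat revenue curve on `S_i` and strictly lower revenue off `S_i`; since all `S_i` contain `k`,
the price `v k` is optimal for every `x^{S_i}`, hence for `x`, and `v ℓ` attains the same
(maximal) revenue for `x` exactly when it does so for every `x^{S_i}`, i.e. when `ℓ ∈ S_i`
for all `i`.
-/

lemma rev_sum_smul {K : ℕ} (v : Fin K → ℝ) {ι : Type*} (s : Finset ι) (α : ι → ℝ)
    (y : ι → Fin K → ℝ) (ℓ : Fin K) :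
    rev v (∑ i ∈ s, α i • y i) ℓ = ∑ i ∈ s, α i * rev v (y i) ℓ := by
  simp only [rev, Finset.sum_apply, Pi.smul_apply, smul_eq_mul, mul_sum]
  rw [sum_comm]
  exact sum_congr rfl fun _ _ => sum_congr rfl fun _ _ => by ring

lemma optPrice_iff_rev_eq {K : ℕ} {v x : Fin K → ℝ} {k : Fin K} (hk : OptPrice v x k)
    (ℓ : Fin K) : OptPrice v x ℓ ↔ rev v x ℓ = rev v x k :=
  ⟨fun hℓ => le_antisymm (hk ℓ) (hℓ k), fun h i => h ▸ hk i⟩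

lemma sum_Ici_eq_sum_Ici_of_eq_zero {ι M : Type*} [LinearOrder ι] [LocallyFiniteOrderTop ι]
    [AddCommMonoid M] {y : ι → M} {ℓ i : ι} (hℓi : ℓ ≤ i)
    (hy : ∀ j, ℓ ≤ j → j < i → y j = 0) :
    ∑ j ∈ Ici ℓ, y j = ∑ j ∈ Ici i, y j := by
  refine (sum_subset (Ici_subset_Ici.2 hℓi) fun j hj hji => ?_).symm
  exact hy j (mem_Ici.1 hj) (not_le.1 (mt mem_Ici.2 hji))

namespace IsCharMarket

variable {K : ℕ} {v : Fin K → ℝ} {S : Finset (Fin K)} {y : Fin K → ℝ}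

lemma rev_pos (hv0 : ∀ k, 0 < v k) (hy : IsCharMarket v S y) {s : Fin K} (hs : s ∈ S) :
    0 < rev v y s := by
  obtain ⟨⟨hnonneg, hsum⟩, hzero, hflat⟩ := hy
  obtain ⟨j, -, hj⟩ : ∃ j ∈ univ, (0 : ℝ) < y j :=
    exists_lt_of_sum_lt (by simp [hsum])
  have hjS : j ∈ S := by_contra fun hjS => hj.ne' (hzero j hjS)
  rw [← hflat j hjS s hs]
  exact mul_pos (hv0 j) (hj.trans_le
    (single_le_sum (fun i _ => hnonneg i) (mem_Ici.2 le_rfl)))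

lemma rev_lt_of_notMem (hv0 : ∀ k, 0 < v k) (hv : StrictMono v) (hy : IsCharMarket v S y)
    {s ℓ : Fin K} (hs : s ∈ S) (hℓ : ℓ ∉ S) : rev v y ℓ < rev v y s := by
  have hpos := hy.rev_pos hv0 hs
  by_cases hT : (S.filter (ℓ ≤ ·)).Nonempty
  · -- the tail of `y` above `ℓ` is the tail above the next point `i` of `S`
    set i := (S.filter (ℓ ≤ ·)).min' hT
    obtain ⟨hiS, hℓi⟩ := mem_filter.1 ((S.filter (ℓ ≤ ·)).min'_mem hT)
    have htail : ∑ j ∈ Ici ℓ, y j = ∑ j ∈ Ici i, y j :=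
      sum_Ici_eq_sum_Ici_of_eq_zero hℓi fun j hℓj hji => hy.2.1 j fun hjS =>
        hji.not_ge ((S.filter (ℓ ≤ ·)).min'_le j (mem_filter.2 ⟨hjS, hℓj⟩))
    have hri : rev v y i = rev v y s := hy.2.2 i hiS s hs
    have htail_pos : 0 < ∑ j ∈ Ici i, y j :=
      pos_of_mul_pos_right (hri.symm ▸ hpos : 0 < rev v y i) (hv0 i).le
    calc rev v y ℓ = v ℓ * ∑ j ∈ Ici i, y j := by rw [rev, htail]
      _ < v i * ∑ j ∈ Ici i, y j :=
        mul_lt_mul_of_pos_right (hv (hℓi.lt_of_ne fun h => hℓ (h ▸ hiS))) htail_pos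
      _ = rev v y s := hri
  · have htail : ∑ j ∈ Ici ℓ, y j = 0 :=
      sum_eq_zero fun j hj => hy.2.1 j fun hjS =>
        hT ⟨j, mem_filter.2 ⟨hjS, mem_Ici.1 hj⟩⟩
    rwa [rev, htail, mul_zero]

lemma rev_le (hv0 : ∀ k, 0 < v k) (hv : StrictMono v) (hy : IsCharMarket v S y)
    {s : Fin K} (hs : s ∈ S) (ℓ : Fin K) : rev v y ℓ ≤ rev v y s := by
  by_cases hℓ : ℓ ∈ S
  · exact (hy.2.2 ℓ hℓ s hs).le
  · exact (hy.rev_lt_of_notMem hv0 hv hs hℓ).le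

lemma rev_eq_iff (hv0 : ∀ k, 0 < v k) (hv : StrictMono v) (hy : IsCharMarket v S y)
    {s : Fin K} (hs : s ∈ S) (ℓ : Fin K) : rev v y ℓ = rev v y s ↔ ℓ ∈ S :=
  ⟨fun h => by_contra fun hℓ => (hy.rev_lt_of_notMem hv0 hv hs hℓ).ne h,
    fun hℓ => hy.2.2 ℓ hℓ s hs⟩

end IsCharMarket

theorem stmt9_general {K : ℕ} (v : Fin K → ℝ)
    (hv0 : ∀ k, 0 < v k) (hv : StrictMono v)
    (xS : Finset (Fin K) → Fin K → ℝ)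
    (hxS : ∀ S : Finset (Fin K), S.Nonempty → IsCharMarket v S (xS S))
    (k : Fin K) (m : ℕ) (α : Fin m → ℝ) (S : Fin m → Finset (Fin K))
    (hα : ∀ i, 0 < α i) (hkS : ∀ i, k ∈ S i)
    (x : Fin K → ℝ) (hxsum : x = ∑ i, α i • xS (S i))
    (ℓ : Fin K) :
    OptPrice v x ℓ ↔ ∀ i, ℓ ∈ S i := by
  have hchar i : IsCharMarket v (S i) (xS (S i)) := hxS (S i) ⟨k, hkS i⟩
  have hrev j : rev v x j = ∑ i, α i * rev v (xS (S i)) j := hxsum ▸ rev_sum_smul v _ α _ j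
  have hle i j : α i * rev v (xS (S i)) j ≤ α i * rev v (xS (S i)) k :=
    mul_le_mul_of_nonneg_left ((hchar i).rev_le hv0 hv (hkS i) j) (hα i).le
  have hk : OptPrice v x k := fun j => by
    rw [hrev, hrev]
    exact sum_le_sum fun i _ => hle i j
  rw [optPrice_iff_rev_eq hk, hrev, hrev, sum_eq_sum_iff_of_le fun i _ => hle i ℓ]
  simp only [mem_univ, true_implies, mul_right_inj' (hα _).ne',
    (hchar _).rev_eq_iff hv0 hv (hkS _)]

theorem stmt9 {K : ℕ} (hK : 2 ≤ K) (v : Fin K → ℝ)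
    (hv0 : ∀ k, 0 < v k) (hv : StrictMono v)
    (xS : Finset (Fin K) → Fin K → ℝ)
    (hxS : ∀ S : Finset (Fin K), S.Nonempty → IsCharMarket v S (xS S))
    (k : Fin K) (m : ℕ) (hm : 1 ≤ m) (α : Fin m → ℝ) (S : Fin m → Finset (Fin K))
    (hα : ∀ i, 0 < α i) (hαsum : ∑ i, α i = 1) (hkS : ∀ i, k ∈ S i)
    (x : Fin K → ℝ) (hx : IsMarket K x) (hxsum : x = ∑ i, α i • xS (S i))
    (ℓ : Fin K) :
    OptPrice v x ℓ ↔ ∀ i, ℓ ∈ S i :=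
  stmt9_general v hv0 hv xS hxS k m α S hα hkS x hxsum ℓ
end
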